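/- (Bootstrapped deviation bound from tail estimate) Suppose M_n satisfies: there exist c > 0 with P(M_{m} ≥ m_{m} + y) ≥ c(1+y)e^{−y} for all m ≥ 1 and y ∈ [0, m^{1/2}], and suppose there exist a > 0, ρ > 1 such that a.s. on S, #{|u|=k : V(u) ≥ −ka} ≥ ρ^k for all large k. Then for every k ≥ 1 and y ≥ 0, P(M_n ≤ m_n − y) ≤ P(#{|u|=k : V(u) ≥ −ka} < ρ^k) + (1 − c(ka − y)_+ e^{−ka})^{ρ^k}, where m_n = −(3/2) log n, and consequently limsup_{n→∞} P(M_n ≤ m_n − y, S) → 0 along y = ka − 1, k → ∞. -/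

import Mathlib

open MeasureTheory ProbabilityTheory Real Filter
open scoped Classical ENNReal

/-- A branching random walk: the offspring point processes `(N u, (L u i)_i)` (number of
children and relative displacements of the children) indexed by Ulam–Harris words `u` are
i.i.d. -/
structure BRW (Ω : Type) [MeasurableSpace Ω] where
  μ : Measure Ω
  prob : IsProbabilityMeasure μ
  N : List ℕ → Ω → ℕ
  L : List ℕ → ℕ → Ω → ℝ
  meas_N : ∀ u, Measurable (N u)
  meas_L : ∀ u i, Measurable (L u i)
  ident : ∀ u v : List ℕ,
    Measure.map (fun ω => (N u ω, fun i => L u i ω)) μ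
      = Measure.map (fun ω => (N v ω, fun i => L v i ω)) μ
  indep : iIndepFun
    (fun u ω => (N u ω, fun i => L u i ω)) μ

attribute [instance] BRW.prob

variable {Ω : Type} [MeasurableSpace Ω]

/-- The set of particles alive at generation `n` (Ulam–Harris labels). -/
def BRW.gen (B : BRW Ω) : ℕ → Ω → Finset (List ℕ)
  | 0, _ => {[]}
  | n+1, ω => (B.gen n ω).biUnion fun u => (Finset.range (B.N u ω)).image fun i => u ++ [i]

/-- The position `V(u)` of the particle `u`. -/
def BRW.pos (B : BRW Ω) (u : List ℕ) (ω : Ω) : ℝ :=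
  ∑ j ∈ Finset.range u.length, B.L (u.take j) (u.getD j 0) ω

/-- Supercriticality: `E[∑_{|u|=1} 1] > 1`. -/
def BRW.supercritical (B : BRW Ω) : Prop :=
  1 < ∫⁻ ω, ((B.gen 1 ω).card : ℝ≥0∞) ∂B.μ

/-- The boundary case: `E[∑ e^{V(u)}] = 1`, `E[∑ V(u)e^{V(u)}] = 0`,
`E[∑ V(u)² e^{V(u)}] < ∞`. -/
def BRW.boundary (B : BRW Ω) : Prop :=
  (∫⁻ ω, ∑ u ∈ B.gen 1 ω, ENNReal.ofReal (Real.exp (B.pos u ω)) ∂B.μ = 1) ∧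
  Integrable (fun ω => ∑ u ∈ B.gen 1 ω, B.pos u ω * Real.exp (B.pos u ω)) B.μ ∧
  (∫ ω, ∑ u ∈ B.gen 1 ω, B.pos u ω *  Real.exp (B.pos u ω) ∂B.μ = 0) ∧
  (∫⁻ ω, ∑ u ∈ B.gen 1 ω, ENNReal.ofReal ((B.pos u ω) ^ 2 * Real.exp (B.pos u ω)) ∂B.μ < ⊤)

/-- Integrability condition (1.3): `E[∑ e^{V(u)} (log₊ ∑ (1+V(v)₊)e^{V(v)})²] < ∞`. -/
def BRW.spineCond (B : BRW Ω) : Prop :=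
  ∫⁻ ω, ENNReal.ofReal ((∑ u ∈ B.gen 1 ω, Real.exp (B.pos u ω)) *
    (max (Real.log (∑ v ∈ B.gen 1 ω, (1 + max (B.pos v ω) 0) * Real.exp (B.pos v ω))) 0) ^ 2)
      ∂B.μ < ⊤

/-- The survival event `S = {#T = ∞}`. -/
def BRW.survival (B : BRW Ω) : Set Ω := {ω | ∀ n, (B.gen n ω).Nonempty}

/-- The bent curve `f_n(k) = (3/2) log((n-k+1)/(n+1))`. -/
noncomputable def fcurve (n k : ℕ) : ℝ := (3 / 2) * Real.log (((n : ℝ) - k + 1) / (n + 1))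

/-- `m_n = -(3/2) log n`. -/
noncomputable def mshift (n : ℕ) : ℝ := -(3 / 2) * Real.log n

/-!
Fix `k` and suppose at least `ρ^k` particles of generation `k` lie above `-ka`. For `M_n ≤ m_n - y`
to happen, the subtree of every such particle must keep below `m_n - y + ka` for the remaining
`n - k` generations, and `m_n - y + ka < m_{n-k} + (ka - y)`. These subtrees are independent of
the first `k` generations and of each other, and each is a copy of the whole walk, so the tail
estimate bounds each of these probabilities by `1 - c (1 + y') e^{-y'}` with `y' = (ka - y)_+`;
independence turns this into the `ρ^k`-th power. With `y = ka - 1` this power tends to `0` as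
`k → ∞`, and so does `P(#{|u| = k : V(u) ≥ -ka} < ρ^k, S)` by the almost sure growth on `S`.
-/

open Topology

noncomputable section

theorem mshift_lt_mshift {m n : ℕ} (hm : 0 < m) (h : m < n) : mshift n < mshift m := by
  have := Real.log_lt_log (Nat.cast_pos.2 hm) (Nat.cast_lt.2 h : (m : ℝ) < n)
  simp only [mshift]
  linarith

theorem eventually_le_sqrt_natCast (y : ℝ) : ∀ᶠ m : ℕ in atTop, y ≤ √(m : ℝ) :=
  (tendsto_sqrt_atTop.comp tendsto_natCast_atTop_atTop).eventually_ge_atTop y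

theorem limsup_measureReal_le {α : Type*} [MeasurableSpace α] {μ : Measure α} {s : ℕ → Set α}
    {b : ℝ} (h : ∀ᶠ n in atTop, μ.real (s n) ≤ b) : limsup (fun n => μ.real (s n)) atTop ≤ b :=
  limsup_le_of_le (isCoboundedUnder_le_of_le atTop fun _ => measureReal_nonneg) h

theorem limsup_measureReal_nonneg {α : Type*} [MeasurableSpace α] {μ : Measure α}
    [IsProbabilityMeasure μ] (s : ℕ → Set α) : 0 ≤ limsup (fun n => μ.real (s n)) atTop :=
  le_limsup_of_frequently_le (.of_forall fun _ => measureReal_nonneg)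
    (isBoundedUnder_of ⟨1, fun _ => measureReal_le_one⟩)

theorem tendsto_measureReal_of_ae_eventually_notMem {α : Type*} [MeasurableSpace α]
    {μ : Measure α} [IsFiniteMeasure μ] {s : ℕ → Set α} (hs : ∀ n, MeasurableSet (s n))
    (h : ∀ᵐ x ∂μ, ∀ᶠ n in atTop, x ∉ s n) : Tendsto (fun n => μ.real (s n)) atTop (𝓝 0) := by
  set D : ℕ → Set α := fun K => ⋃ j ≥ K, s j
  have hD : Tendsto (fun K => μ (D K)) atTop (𝓝 0) := by
    have hlim := tendsto_measure_iInter_atTop (μ := μ) (s := D)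
      (fun K => (MeasurableSet.iUnion fun j => .iUnion fun _ => hs j).nullMeasurableSet)
      (fun K L hKL x hx => by
        obtain ⟨j, hj, hx⟩ := Set.mem_iUnion₂.1 hx
        exact Set.mem_iUnion₂.2 ⟨j, hKL.trans hj, hx⟩)
      ⟨0, measure_ne_top _ _⟩
    rwa [measure_eq_zero_iff_ae_notMem.2 ?_] at hlim
    filter_upwards [h] with x hx hxD
    refine frequently_atTop.2 (fun K => ?_) hx
    simpa [D] using Set.mem_iInter.1 hxD K
  have hle (K : ℕ) : μ (s K) ≤ μ (D K) := measure_mono fun x hx => Set.mem_iUnion₂.2 ⟨K, le_rfl, hx⟩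
  simpa [Function.comp_def, measureReal_def] using (ENNReal.tendsto_toReal ENNReal.zero_ne_top).comp
    (tendsto_of_tendsto_of_tendsto_of_le_of_le tendsto_const_nhds hD (fun _ => zero_le) hle)

theorem tendsto_rpow_pow_nhds_zero {q ρ : ℝ} (hq₀ : 0 ≤ q) (hq₁ : q < 1) (hρ : 1 < ρ) :
    Tendsto (fun k : ℕ => q ^ (ρ ^ k)) atTop (𝓝 0) :=
  (tendsto_rpow_atTop_of_base_lt_one q (by linarith) hq₁).comp
    (tendsto_pow_atTop_atTop_of_one_lt hρ)

namespace BRW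

variable (B : BRW Ω)

def offspring (u : List ℕ) (ω : Ω) : ℕ × (ℕ → ℝ) := (B.N u ω, fun i => B.L u i ω)

theorem measurable_offspring (u : List ℕ) : Measurable (B.offspring u) :=
  (B.meas_N u).prodMk (measurable_pi_lambda _ (B.meas_L u))

/-- The event `M_n ≤ t`. -/
def allLE (n : ℕ) (t : ℝ) : Set Ω := {ω | ∀ u ∈ B.gen n ω, B.pos u ω ≤ t}

def above (k : ℕ) (x : ℝ) (ω : Ω) : Finset (List ℕ) := (B.gen k ω).filter fun u => x ≤ B.pos u ω

theorem mem_gen_succ {n : ℕ} {u : List ℕ} {ω : Ω} :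
    u ∈ B.gen (n + 1) ω ↔ ∃ w ∈ B.gen n ω, ∃ i < B.N w ω, w ++ [i] = u := by
  simp [gen]

theorem length_of_mem_gen {n : ℕ} {u : List ℕ} {ω : Ω} (h : u ∈ B.gen n ω) : u.length = n := by
  induction n generalizing u with
  | zero => simp_all [gen]
  | succ n ih =>
    obtain ⟨w, hw, i, -, rfl⟩ := B.mem_gen_succ.1 h
    simp [ih hw]

/-- The branching random walk rooted at `u`, with positions measured relative to `V(u)`. -/
def shift (u : List ℕ) : BRW Ω where
  μ := B.μ
  prob := B.prob
  N w := B.N (u ++ w)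
  L w := B.L (u ++ w)
  meas_N _ := B.meas_N _
  meas_L _ := B.meas_L _
  ident _ _ := B.ident _ _
  indep := B.indep.precomp (List.append_right_injective u)

theorem append_mem_gen {k m : ℕ} {u v : List ℕ} {ω : Ω} (hu : u ∈ B.gen k ω)
    (hv : v ∈ (B.shift u).gen m ω) : u ++ v ∈ B.gen (k + m) ω := by
  induction m generalizing v with
  | zero => simp_all [gen]
  | succ m ih =>
    obtain ⟨w, hw, i, hi, rfl⟩ := (B.shift u).mem_gen_succ.1 hv
    exact B.mem_gen_succ.2 ⟨u ++ w, ih hw, i, hi, by simp⟩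

theorem pos_append (u v : List ℕ) (ω : Ω) :
    B.pos (u ++ v) ω = B.pos u ω + (B.shift u).pos v ω := by
  simp only [pos, shift, List.length_append, Finset.sum_range_add]
  congr 1
  · refine Finset.sum_congr rfl fun j hj => ?_
    have hj : j < u.length := Finset.mem_range.mp hj
    rw [List.take_append_of_le_length hj.le, List.getD_append _ _ _ _ hj]
  · refine Finset.sum_congr rfl fun j _ => ?_
    rw [List.take_append, List.take_of_length_le (by omega), Nat.add_sub_cancel_left,
      List.getD_append_right _ _ _ _ (by omega), Nat.add_sub_cancel_left]

abbrev sigmaAlg (S : Set (List ℕ)) : MeasurableSpace Ω :=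
  ⨆ w ∈ S, MeasurableSpace.comap (B.offspring w) inferInstance

theorem measurable_offspring_sigmaAlg {S : Set (List ℕ)} {w : List ℕ} (hw : w ∈ S) :
    Measurable[B.sigmaAlg S] (B.offspring w) :=
  Measurable.of_comap_le
    (le_iSup₂ (f := fun w (_ : w ∈ S) => MeasurableSpace.comap (B.offspring w) inferInstance) w hw)

theorem sigmaAlg_mono {S T : Set (List ℕ)} (h : S ⊆ T) : B.sigmaAlg S ≤ B.sigmaAlg T :=
  iSup₂_le fun _ hw => (B.measurable_offspring_sigmaAlg (h hw)).comap_le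

theorem sigmaAlg_le (S : Set (List ℕ)) : B.sigmaAlg S ≤ ‹MeasurableSpace Ω› :=
  iSup₂_le fun w _ => (B.measurable_offspring w).comap_le

theorem shift_sigmaAlg_le (u : List ℕ) (S : Set (List ℕ)) :
    (B.shift u).sigmaAlg S ≤ B.sigmaAlg {w | u <+: w} :=
  iSup₂_le fun w _ => (B.measurable_offspring_sigmaAlg (List.prefix_append u w)).comap_le

theorem indep_sigmaAlg {S T : Set (List ℕ)} (h : Disjoint S T) :
    Indep (B.sigmaAlg S) (B.sigmaAlg T) B.μ :=
  indep_iSup_of_disjoint (fun w => (B.measurable_offspring w).comap_le) B.indep h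

theorem measurableSet_mem_gen {S : Set (List ℕ)} {n : ℕ}
    (hS : ∀ w : List ℕ, w.length < n → w ∈ S) (u : List ℕ) :
    MeasurableSet[B.sigmaAlg S] {ω | u ∈ B.gen n ω} := by
  induction n generalizing u with
  | zero => exact MeasurableSet.const _
  | succ n ih =>
    have hset : {ω | u ∈ B.gen (n + 1) ω}
        = ⋃ (w : List ℕ) (i : ℕ) (_ : w ++ [i] = u), {ω | w ∈ B.gen n ω} ∩ {ω | i < B.N w ω} := by
      ext ω
      simp [B.mem_gen_succ, and_comm]
    rw [hset]
    refine .iUnion fun w => .iUnion fun i => .iUnion fun _ => ?_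
    by_cases hw : w.length = n
    · exact (ih (fun v hv => hS v (by omega)) w).inter <| measurableSet_lt measurable_const <|
        measurable_fst.comp (B.measurable_offspring_sigmaAlg (hS w (by omega)))
    · convert @MeasurableSet.empty Ω (B.sigmaAlg S)
      exact Set.eq_empty_of_forall_notMem fun ω hω => hw (B.length_of_mem_gen hω.1)

theorem measurable_pos {S : Set (List ℕ)} {u : List ℕ}
    (hS : ∀ w : List ℕ, w.length < u.length → w ∈ S) : Measurable[B.sigmaAlg S] (B.pos u) :=
  Finset.measurable_sum _ fun j hj => (measurable_pi_apply _).comp <| measurable_snd.comp <|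
    B.measurable_offspring_sigmaAlg (hS _ (by simp; simpa using hj))

theorem measurableSet_above_eq {S : Set (List ℕ)} {k : ℕ}
    (hS : ∀ w : List ℕ, w.length < k → w ∈ S) (x : ℝ) (s : Finset (List ℕ)) :
    MeasurableSet[B.sigmaAlg S] {ω | B.above k x ω = s} := by
  have hmem (u : List ℕ) : MeasurableSet[B.sigmaAlg S] {ω | u ∈ B.above k x ω} := by
    by_cases hu : u.length = k
    · simp only [above, Finset.mem_filter, Set.ofPred_and]
      exact (B.measurableSet_mem_gen hS u).inter
        (measurableSet_le measurable_const (B.measurable_pos fun w hw => hS w (hu ▸ hw)))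
    · convert @MeasurableSet.empty Ω (B.sigmaAlg S)
      exact Set.eq_empty_of_forall_notMem fun ω hω =>
        hu (B.length_of_mem_gen (Finset.mem_filter.1 hω).1)
  have hset : {ω | B.above k x ω = s} = ⋂ u, {ω | u ∈ B.above k x ω ↔ u ∈ s} := by
    ext ω
    simp [Finset.ext_iff]
  rw [hset]
  refine .iInter fun u => ?_
  by_cases hu : u ∈ s
  · simpa only [hu, iff_true] using hmem u
  · simp only [hu, iff_false]
    exact (hmem u).compl

theorem measurableSet_allLE (n : ℕ) (t : ℝ) :
    MeasurableSet[B.sigmaAlg Set.univ] (B.allLE n t) := by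
  have hset : B.allLE n t = ⋂ u, {ω | u ∈ B.gen n ω}ᶜ ∪ {ω | B.pos u ω ≤ t} := by
    ext ω
    simp [allLE, imp_iff_not_or]
  rw [hset]
  exact .iInter fun u => (B.measurableSet_mem_gen (fun w _ => trivial) u).compl.union
    (measurableSet_le (B.measurable_pos fun w _ => trivial) measurable_const)

theorem measurableSet_above_mem {k : ℕ} (x : ℝ) (T : Set (Finset (List ℕ))) :
    MeasurableSet {ω | B.above k x ω ∈ T} := by
  have hset : {ω | B.above k x ω ∈ T} = ⋃ s ∈ T, {ω | B.above k x ω = s} := by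
    ext ω
    simp
  rw [hset]
  exact .biUnion (Set.to_countable T) fun s _ =>
    B.sigmaAlg_le _ _ (B.measurableSet_above_eq (fun w _ => Set.mem_univ w) x s)

theorem measurableSet_survival : MeasurableSet B.survival := by
  have hset : B.survival = ⋂ n, ⋃ u, {ω | u ∈ B.gen n ω} := by
    ext ω
    simp [survival, Finset.Nonempty]
  rw [hset]
  exact .iInter fun n => .iUnion fun u =>
    B.sigmaAlg_le _ _ (B.measurableSet_mem_gen (fun w _ => Set.mem_univ w) u)

def law : Measure (ℕ × (ℕ → ℝ)) := B.μ.map (B.offspring [])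

instance : IsProbabilityMeasure B.law :=
  Measure.isProbabilityMeasure_map (B.measurable_offspring []).aemeasurable

theorem map_offspring (u : List ℕ) : B.μ.map (B.offspring u) = B.law := B.ident u []

theorem law_shift (u : List ℕ) : (B.shift u).law = B.law := B.ident (u ++ []) []

def env (ω : Ω) : List ℕ → ℕ × (ℕ → ℝ) := fun w => B.offspring w ω

theorem map_env : B.μ.map B.env = Measure.infinitePi fun _ => B.law := by
  rw [show B.env = fun ω w => B.offspring w ω from rfl,
    B.indep.map_fun_eq_infinitePi_map B.measurable_offspring]
  simp_rw [B.map_offspring]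

/-- The coordinate process on the space of environments under the product measure `ν^{⊗ List ℕ}`. -/
def canonical (ν : Measure (ℕ × (ℕ → ℝ))) [IsProbabilityMeasure ν] :
    BRW (List ℕ → ℕ × (ℕ → ℝ)) where
  μ := Measure.infinitePi fun _ => ν
  prob := inferInstance
  N w x := (x w).1
  L w i x := (x w).2 i
  meas_N w := (measurable_pi_apply w).fst
  meas_L w i := (measurable_pi_apply i).comp (measurable_pi_apply w).snd
  ident _ _ := by simp only [Prod.mk.eta, Measure.infinitePi_map_eval]
  indep := iIndepFun_infinitePi (X := fun _ => id) fun _ => measurable_id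

theorem gen_eq_canonical_gen (ν : Measure (ℕ × (ℕ → ℝ))) [IsProbabilityMeasure ν] (n : ℕ)
    (ω : Ω) : B.gen n ω = (canonical ν).gen n (B.env ω) := by
  induction n with
  | zero => rfl
  | succ n ih => simp only [gen, ih]; rfl

theorem allLE_eq_preimage (ν : Measure (ℕ × (ℕ → ℝ))) [IsProbabilityMeasure ν] (n : ℕ) (t : ℝ) :
    B.allLE n t = B.env ⁻¹' (canonical ν).allLE n t := by
  ext ω
  simp only [allLE, Set.mem_ofPred_eq, Set.mem_preimage, B.gen_eq_canonical_gen ν]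
  rfl

-- Pulling back along `env`, the law of `M_n` depends on the walk only through its offspring law.
theorem measure_allLE_eq_infinitePi (ν : Measure (ℕ × (ℕ → ℝ))) [IsProbabilityMeasure ν]
    (n : ℕ) (t : ℝ) :
    B.μ (B.allLE n t) = Measure.infinitePi (fun _ => B.law) ((canonical ν).allLE n t) := by
  rw [B.allLE_eq_preimage ν,
    ← Measure.map_apply (measurable_pi_lambda _ B.measurable_offspring : Measurable B.env)
    ((canonical ν).sigmaAlg_le _ _ ((canonical ν).measurableSet_allLE n t)), map_env]

theorem measure_shift_allLE (u : List ℕ) (n : ℕ) (t : ℝ) :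
    B.μ ((B.shift u).allLE n t) = B.μ (B.allLE n t) := by
  change (B.shift u).μ _ = _
  rw [measure_allLE_eq_infinitePi _ B.law, law_shift, ← measure_allLE_eq_infinitePi]

theorem measure_inter_biInter_eq_mul_prod {k : ℕ} {E : Set Ω}
    (hE : MeasurableSet[B.sigmaAlg {w | w.length < k}] E) {F : List ℕ → Set Ω}
    (hF : ∀ u, MeasurableSet[B.sigmaAlg {w | u <+: w}] (F u)) {s : Finset (List ℕ)}
    (hs : ∀ u ∈ s, u.length = k) :
    B.μ (E ∩ ⋂ u ∈ s, F u) = B.μ E * ∏ u ∈ s, B.μ (F u) := by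
  induction s using Finset.induction_on with
  | empty => simp
  | insert u₀ s hu₀ ih =>
    have hs' : ∀ u ∈ s, u.length = k := fun u hu => hs u (Finset.mem_insert_of_mem hu)
    have hu₀k := hs u₀ (Finset.mem_insert_self u₀ s)
    have hrest : MeasurableSet[B.sigmaAlg {w | ¬u₀ <+: w}] (E ∩ ⋂ u ∈ s, F u) := by
      refine .inter (B.sigmaAlg_mono ?_ _ hE)
        (.biInter (Set.to_countable _) fun u hu => B.sigmaAlg_mono ?_ _ (hF u))
      · intro w (hw : w.length < k) hpre
        have := hpre.length_le
        omega
      · intro w hw hpre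
        have hlen : u₀.length = u.length := by rw [hu₀k, hs' u hu]
        exact hu₀ ((List.prefix_of_prefix_length_le hpre hw hlen.le).eq_of_length hlen ▸ hu)
    have hindep := B.indep_sigmaAlg (S := {w | ¬u₀ <+: w}) (T := {w | u₀ <+: w})
      (Set.disjoint_left.2 fun _ h => h)
    rw [Finset.set_biInter_insert, Set.inter_left_comm, Set.inter_comm,
      (Indep_iff _ _ _).1 hindep _ _ hrest (hF u₀), ih hs', Finset.prod_insert hu₀]
    ring

theorem allLE_inter_above_eq_subset {k m : ℕ} {x t : ℝ} (s : Finset (List ℕ)) :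
    B.allLE (k + m) t ∩ {ω | B.above k x ω = s} ⊆ ⋂ u ∈ s, (B.shift u).allLE m (t - x) := by
  rintro ω ⟨hω, rfl⟩
  simp only [Set.mem_iInter]
  intro u hu v hv
  obtain ⟨hu, hxu⟩ := Finset.mem_filter.1 hu
  have := hω _ (B.append_mem_gen hu hv)
  rw [B.pos_append] at this
  linarith

theorem measure_allLE_inter_above_eq_le {k m : ℕ} {x t q r : ℝ} (hq₀ : 0 ≤ q) (hq₁ : q ≤ 1)
    (hr : 0 ≤ r) (hq : B.μ (B.allLE m (t - x)) ≤ ENNReal.ofReal q) {s : Finset (List ℕ)}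
    (hs : r ≤ s.card) :
    B.μ (B.allLE (k + m) t ∩ {ω | B.above k x ω = s})
      ≤ ENNReal.ofReal (q ^ r) * B.μ {ω | B.above k x ω = s} := by
  rcases Set.eq_empty_or_nonempty {ω | B.above k x ω = s} with hempty | ⟨ω₀, hω₀⟩
  · simp [hempty]
  have hlen : ∀ u ∈ s, u.length = k := fun u hu =>
    B.length_of_mem_gen (Finset.mem_filter.1 (hω₀ ▸ hu : u ∈ B.above k x ω₀)).1
  calc B.μ (B.allLE (k + m) t ∩ {ω | B.above k x ω = s})
      ≤ B.μ ({ω | B.above k x ω = s} ∩ ⋂ u ∈ s, (B.shift u).allLE m (t - x)) :=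
        measure_mono fun ω hω => ⟨hω.2, B.allLE_inter_above_eq_subset s hω⟩
    _ = B.μ {ω | B.above k x ω = s} * ∏ u ∈ s, B.μ ((B.shift u).allLE m (t - x)) :=
        B.measure_inter_biInter_eq_mul_prod (B.measurableSet_above_eq (fun _ h => h) x s)
          (fun u => B.shift_sigmaAlg_le u _ _ ((B.shift u).measurableSet_allLE m _)) hlen
    _ ≤ B.μ {ω | B.above k x ω = s} * ENNReal.ofReal q ^ s.card := by
        gcongr
        exact Finset.prod_le_pow_card _ _ _ fun u _ => B.measure_shift_allLE u m _ ▸ hq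
    _ ≤ ENNReal.ofReal (q ^ r) * B.μ {ω | B.above k x ω = s} := by
        rw [mul_comm, ← ENNReal.ofReal_pow hq₀, ← Real.rpow_natCast]
        exact mul_le_mul_left
          (ENNReal.ofReal_le_ofReal (Real.rpow_le_rpow_of_exponent_ge' hq₀ hq₁ hr hs)) _

theorem measure_allLE_inter_card_above_le {k m : ℕ} {x t q r : ℝ} (hq₀ : 0 ≤ q) (hq₁ : q ≤ 1)
    (hr : 0 ≤ r) (hq : B.μ (B.allLE m (t - x)) ≤ ENNReal.ofReal q) :
    B.μ (B.allLE (k + m) t ∩ {ω | r ≤ (B.above k x ω).card}) ≤ ENNReal.ofReal (q ^ r) := by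
  set A := B.allLE (k + m) t ∩ {ω | r ≤ (B.above k x ω).card}
  have hslice (s : Finset (List ℕ)) :
      B.μ (A ∩ {ω | B.above k x ω = s}) ≤ ENNReal.ofReal (q ^ r) * B.μ {ω | B.above k x ω = s} := by
    by_cases hs : r ≤ s.card
    · exact (measure_mono (Set.inter_subset_inter_left _ Set.inter_subset_left)).trans
        (B.measure_allLE_inter_above_eq_le hq₀ hq₁ hr hq hs)
    · have hAs : A ∩ {ω | B.above k x ω = s} = ∅ :=
        Set.eq_empty_of_forall_notMem fun ω hω => hs (hω.2 ▸ hω.1.2)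
      simp [hAs]
  calc B.μ A ≤ B.μ (⋃ s, A ∩ {ω | B.above k x ω = s}) :=
        measure_mono fun ω hω => Set.mem_iUnion.2 ⟨_, hω, rfl⟩
    _ ≤ ∑' s, B.μ (A ∩ {ω | B.above k x ω = s}) := measure_iUnion_le _
    _ ≤ ∑' s, ENNReal.ofReal (q ^ r) * B.μ {ω | B.above k x ω = s} := ENNReal.tsum_le_tsum hslice
    _ = ENNReal.ofReal (q ^ r) * B.μ (⋃ s, {ω | B.above k x ω = s}) := by
        rw [ENNReal.tsum_mul_left, measure_iUnion
          (fun s s' hne => Set.disjoint_left.2 fun ω h h' => hne (h.symm.trans h'))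
          fun s => B.sigmaAlg_le _ _ (B.measurableSet_above_eq (fun w _ => Set.mem_univ w) x s)]
    _ ≤ ENNReal.ofReal (q ^ r) := mul_le_of_le_one_right' prob_le_one

theorem measureReal_allLE_inter_le (X : Set Ω) {k m : ℕ} {x t q r : ℝ} (hq₀ : 0 ≤ q)
    (hq₁ : q ≤ 1) (hr : 0 ≤ r) (hq : B.μ.real (B.allLE m (t - x)) ≤ q) :
    B.μ.real (B.allLE (k + m) t ∩ X)
      ≤ B.μ.real ({ω | ((B.above k x ω).card : ℝ) < r} ∩ X) + q ^ r := by
  have hsplit : B.allLE (k + m) t ∩ X ⊆ (B.allLE (k + m) t ∩ {ω | r ≤ (B.above k x ω).card})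
      ∪ ({ω | ((B.above k x ω).card : ℝ) < r} ∩ X) := fun ω ⟨hA, hX⟩ =>
    (le_or_gt r (B.above k x ω).card).imp (fun h => ⟨hA, h⟩) fun h => ⟨h, hX⟩
  have hgood := B.measure_allLE_inter_card_above_le (k := k) hq₀ hq₁ hr
    ((ENNReal.le_ofReal_iff_toReal_le (measure_ne_top _ _) hq₀).2 hq)
  calc B.μ.real (B.allLE (k + m) t ∩ X)
      ≤ B.μ.real (B.allLE (k + m) t ∩ {ω | r ≤ (B.above k x ω).card})
        + B.μ.real ({ω | ((B.above k x ω).card : ℝ) < r} ∩ X) :=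
        (measureReal_mono hsplit).trans (measureReal_union_le _ _)
    _ ≤ q ^ r + B.μ.real ({ω | ((B.above k x ω).card : ℝ) < r} ∩ X) := by
        gcongr
        exact ENNReal.toReal_le_of_le_ofReal (Real.rpow_nonneg hq₀ r) hgood
    _ = _ := add_comm _ _

def HasTailLowerBound (c : ℝ) : Prop :=
  ∀ m : ℕ, 1 ≤ m → ∀ y : ℝ, y ∈ Set.Icc 0 (Real.sqrt m) →
    c * (1 + y) * Real.exp (-y) ≤ B.μ.real {ω | ∃ u ∈ B.gen m ω, mshift m + y ≤ B.pos u ω}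

theorem measureReal_allLE_add_le_one {n : ℕ} {t r : ℝ} (h : t < r) :
    B.μ.real (B.allLE n t) + B.μ.real {ω | ∃ u ∈ B.gen n ω, r ≤ B.pos u ω} ≤ 1 := by
  rw [← measureReal_union' ?_ (B.sigmaAlg_le _ _ (B.measurableSet_allLE n t))]
  · exact measureReal_le_one
  · exact Set.disjoint_left.2 fun ω hω ⟨u, hu, hru⟩ => (hω u hu).not_gt (h.trans_le hru)

theorem tendsto_measureReal_card_above_lt_inter_survival {x r : ℕ → ℝ}
    (hgrow : ∀ᵐ ω ∂B.μ, ω ∈ B.survival → ∀ᶠ k in atTop, r k ≤ (B.above k (x k) ω).card) :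
    Tendsto (fun k => B.μ.real ({ω | ((B.above k (x k) ω).card : ℝ) < r k} ∩ B.survival))
      atTop (𝓝 0) := by
  refine tendsto_measureReal_of_ae_eventually_notMem (fun k =>
    (B.measurableSet_above_mem _ {s | (s.card : ℝ) < r k}).inter B.measurableSet_survival) ?_
  filter_upwards [hgrow] with ω hω
  by_cases hS : ω ∈ B.survival
  · exact (hω hS).mono fun k hk hbad => hbad.1.not_ge hk
  · exact .of_forall fun k hbad => hS hbad.2

end BRW

namespace BRW.HasTailLowerBound

variable {B : BRW Ω} {c : ℝ}

theorem le_one (h : B.HasTailLowerBound c) {y : ℝ} (hy : 0 ≤ y) :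
    c * (1 + y) * Real.exp (-y) ≤ 1 := by
  obtain ⟨m, hm, hym⟩ := ((eventually_ge_atTop 1).and (eventually_le_sqrt_natCast y)).exists
  exact (h m hm y ⟨hy, hym⟩).trans measureReal_le_one

theorem measureReal_allLE_le (h : B.HasTailLowerBound c) {m : ℕ} (hm : 1 ≤ m) {y t : ℝ}
    (hy : y ∈ Set.Icc 0 √(m : ℝ)) (ht : t < mshift m + y) :
    B.μ.real (B.allLE m t) ≤ 1 - c * (1 + y) * Real.exp (-y) := by
  linarith [B.measureReal_allLE_add_le_one (n := m) ht, h m hm y hy]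

theorem eventually_measureReal_allLE_inter_le (h : B.HasTailLowerBound c) (hc : 0 ≤ c)
    (X : Set Ω) {k : ℕ} (hk : 1 ≤ k) {a y y' r : ℝ} (hy' : 0 ≤ y') (hyy' : k * a - y ≤ y')
    (hr : 0 ≤ r) :
    ∀ᶠ n in atTop, B.μ.real (B.allLE n (mshift n - y) ∩ X)
      ≤ B.μ.real ({ω | ((B.above k (-k * a) ω).card : ℝ) < r} ∩ X)
        + (1 - c * (1 + y') * Real.exp (-y')) ^ r := by
  filter_upwards [eventually_gt_atTop k,
    (tendsto_sub_atTop_nat k).eventually (eventually_le_sqrt_natCast y')] with n hn hsqrt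
  obtain ⟨m, rfl⟩ : ∃ m, n = k + m := ⟨n - k, by omega⟩
  rw [Nat.add_sub_cancel_left] at hsqrt
  have hshift := mshift_lt_mshift (m := m) (n := k + m) (by omega) (by omega)
  refine B.measureReal_allLE_inter_le X ?_ ?_ hr
    (h.measureReal_allLE_le (by omega) ⟨hy', hsqrt⟩ (by linarith))
  · linarith [h.le_one hy']
  · have : 0 ≤ c * (1 + y') * Real.exp (-y') := by positivity
    linarith

theorem limsup_measureReal_allLE_le (h : B.HasTailLowerBound c) (hc : 0 ≤ c) {k : ℕ}
    (hk : 1 ≤ k) {a y r : ℝ} (hy : 0 ≤ y) (hr : 0 ≤ r) :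
    limsup (fun n => B.μ.real (B.allLE n (mshift n - y))) atTop
      ≤ B.μ.real {ω | ((B.above k (-k * a) ω).card : ℝ) < r}
        + (1 - c * max (k * a - y) 0 * Real.exp (-(k * a))) ^ r := by
  set y' := max ((k : ℝ) * a - y) 0
  have hdeficit : c * y' * Real.exp (-(k * a)) ≤ c * (1 + y') * Real.exp (-y') := by
    rcases le_total ((k : ℝ) * a - y) 0 with hneg | hpos
    · simp only [y', max_eq_right hneg, mul_zero, zero_mul]
      positivity
    · have : y' ≤ k * a := by simp only [y', max_eq_left hpos]; linarith
      gcongr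
      linarith
  have hev := h.eventually_measureReal_allLE_inter_le hc Set.univ hk (a := a) (y := y)
    (le_max_right _ _) (le_max_left _ _) hr
  simp only [Set.inter_univ] at hev
  refine (limsup_measureReal_le hev).trans (add_le_add le_rfl (Real.rpow_le_rpow ?_ ?_ hr))
  · linarith [h.le_one (le_max_right ((k : ℝ) * a - y) 0)]
  · linarith

end BRW.HasTailLowerBound

end

theorem bootstrap_deviation_general {Ω : Type} [MeasurableSpace Ω] (B : BRW Ω)
    (c : ℝ) (hc : 0 < c)
    (htail : ∀ m : ℕ, 1 ≤ m → ∀ y : ℝ, y ∈ Set.Icc 0 (Real.sqrt m) →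
      c * (1 + y) * Real.exp (-y) ≤
        (B.μ {ω | ∃ u ∈ B.gen m ω, mshift m + y ≤ B.pos u ω}).toReal)
    (a : ℝ) (ρ : ℝ) (hρ : 1 < ρ)
    (hgrow : ∀ᵐ ω ∂B.μ, ω ∈ B.survival → ∀ᶠ k : ℕ in Filter.atTop,
      ρ ^ k ≤ (((B.gen k ω).filter fun u => -(k : ℝ) * a ≤ B.pos u ω).card : ℝ)) :
    (∀ k : ℕ, 1 ≤ k → ∀ y : ℝ, 0 ≤ y →
      Filter.limsup (fun n : ℕ =>
          (B.μ {ω | ∀ u ∈ B.gen n ω, B.pos u ω ≤ mshift n - y}).toReal) Filter.atTop ≤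
        (B.μ {ω | (((B.gen k ω).filter fun u => -(k : ℝ) * a ≤ B.pos u ω).card : ℝ)
            < ρ ^ k}).toReal +
          (1 - c * max ((k : ℝ) * a - y) 0 * Real.exp (-((k : ℝ) * a))) ^ ((ρ : ℝ) ^ (k : ℕ) : ℝ)) ∧
    Filter.Tendsto (fun k : ℕ =>
        Filter.limsup (fun n : ℕ =>
          (B.μ ({ω | ∀ u ∈ B.gen n ω, B.pos u ω ≤ mshift n - ((k : ℝ) * a - 1)}
            ∩ B.survival)).toReal) Filter.atTop)
      Filter.atTop (nhds 0) := by
  have htail' : B.HasTailLowerBound c := htail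
  have hρ₀ : 0 ≤ ρ := by linarith
  refine ⟨fun k hk y hy => htail'.limsup_measureReal_allLE_le hc.le hk hy (pow_nonneg hρ₀ k), ?_⟩
  set q := 1 - c * (1 + 1) * exp (-1)
  have hq₀ : 0 ≤ q := by linarith [htail'.le_one zero_le_one]
  have hq₁ : q < 1 := by linarith [show 0 < c * (1 + 1) * exp (-1) by positivity]
  have hbound := (B.tendsto_measureReal_card_above_lt_inter_survival (x := fun k => -k * a)
    (r := fun k => ρ ^ k) hgrow).add (tendsto_rpow_pow_nhds_zero hq₀ hq₁ hρ)
  rw [add_zero] at hbound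
  refine tendsto_of_tendsto_of_tendsto_of_le_of_le' tendsto_const_nhds hbound
    (.of_forall fun k => limsup_measureReal_nonneg (μ := B.μ) _) ?_
  filter_upwards [eventually_ge_atTop 1] with k hk
  exact limsup_measureReal_le (htail'.eventually_measureReal_allLE_inter_le hc.le B.survival hk
    zero_le_one (by linarith) (pow_nonneg hρ₀ k))

/-- **Bootstrapped deviation bound from the tail estimate.** Suppose the tail estimate
`P(M_m >= m_m + y) >= c(1+y)e^{-y}` holds for `m >= 1`, `y in [0,sqrt m]`, and that a.s. on
the survival event `#{|u|=k : V(u) >= -ka} >= rho^k` for all large `k`. Then for every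
`k >= 1` and `y >= 0`,
`limsup_n P(M_n <= m_n - y) <= P(#{|u|=k : V(u) >= -ka} < rho^k)
  + (1 - c(ka-y)_+ e^{-ka})^{rho^k}`,
and consequently `limsup_n P(M_n <= m_n - y, S) -> 0` along `y = ka - 1`, `k -> infinity`. -/
theorem bootstrap_deviation {Ω : Type} [MeasurableSpace Ω] (B : BRW Ω)
    (c : ℝ) (hc : 0 < c)
    (htail : ∀ m : ℕ, 1 ≤ m → ∀ y : ℝ, y ∈ Set.Icc 0 (Real.sqrt m) →
      c * (1 + y) * Real.exp (-y) ≤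
        (B.μ {ω | ∃ u ∈ B.gen m ω, mshift m + y ≤ B.pos u ω}).toReal)
    (a : ℝ) (ha : 0 < a) (ρ : ℝ) (hρ : 1 < ρ)
    (hgrow : ∀ᵐ ω ∂B.μ, ω ∈ B.survival → ∀ᶠ k : ℕ in Filter.atTop,
      ρ ^ k ≤ (((B.gen k ω).filter fun u => -(k : ℝ) * a ≤ B.pos u ω).card : ℝ)) :
    (∀ k : ℕ, 1 ≤ k → ∀ y : ℝ, 0 ≤ y →
      Filter.limsup (fun n : ℕ =>
          (B.μ {ω | ∀ u ∈ B.gen n ω, B.pos u ω ≤ mshift n - y}).toReal) Filter.atTop ≤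
        (B.μ {ω | (((B.gen k ω).filter fun u => -(k : ℝ) * a ≤ B.pos u ω).card : ℝ)
            < ρ ^ k}).toReal +
          (1 - c * max ((k : ℝ) * a - y) 0 * Real.exp (-((k : ℝ) * a))) ^ ((ρ : ℝ) ^ (k : ℕ) : ℝ)) ∧
    Filter.Tendsto (fun k : ℕ =>
        Filter.limsup (fun n : ℕ =>
          (B.μ ({ω | ∀ u ∈ B.gen n ω, B.pos u ω ≤ mshift n - ((k : ℝ) * a - 1)}
            ∩ B.survival)).toReal) Filter.atTop)
      Filter.atTop (nhds 0) :=
  bootstrap_deviation_general B c hc htail a ρ hρ hgrow
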